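/- arXiv:2602.20027 — 3 statements merged into one kernel-verified Lean document; each statement's English description precedes it below -/
import Mathlib

section
/- Let X, Y, Z be varieties over ℂ, and let f : X → Y and g : X → Z be morphisms of schemes such that (1) the underlying continuous map of f is a topological quotient map, (2) the natural map 𝒪_Y → f_*𝒪_X is an isomorphism, and (3) for all closed points x, x' of X with f(x) = f(x'), one has g(x) = g(x'). Then for any two (not necessarily closed) scheme points η, η' of X with f(η) = f(η'), one has g(η) = g(η'). -/
open AlgebraicGeometry CategoryTheory Limits

/-! `g` is constant on the fibres of `f` as soon as the two composites `X ×_Y X ⇉ X → Z` agree.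
They agree on closed points by hypothesis, since `f` is locally of finite type (it inherits this
from `X → Spec ℂ`, which factors through `f` because `Γ(Y) ≅ Γ(X)`), so that `X ×_Y X` is
Jacobson and its projections preserve closed points. Two continuous maps out of a Jacobson space
into a T₀ space which agree on closed points agree everywhere. -/

section Topology

variable {X Z : Type*} [TopologicalSpace X] [TopologicalSpace Z] [JacobsonSpace X]
  {u v : X → Z}

lemma specializes_of_eqOn_closedPoints (hu : Continuous u) (hv : Continuous v)
    (h : Set.EqOn u v (closedPoints X)) (x : X) : v x ⤳ u x := by
  let F := u ⁻¹' closure {v x}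
  have hF : IsClosed F := isClosed_closure.preimage hu
  have hsub : closure {x} ∩ closedPoints X ⊆ F := fun y ⟨hxy, hy⟩ => by
    change u y ∈ closure {v x}
    rw [h hy]
    exact ((specializes_iff_mem_closure.mpr hxy).map hv).mem_closure
  have hx : closure {x} ⊆ F := by
    rw [← closure_inter_closedPoints isClosed_closure]
    exact closure_minimal hsub hF
  exact specializes_iff_mem_closure.mpr (hx (subset_closure rfl))

lemma eq_of_eqOn_closedPoints [T0Space Z] (hu : Continuous u) (hv : Continuous v)
    (h : Set.EqOn u v (closedPoints X)) : u = v :=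
  funext fun x => ((specializes_of_eqOn_closedPoints hv hu h.symm x).antisymm
    (specializes_of_eqOn_closedPoints hu hv h x)).eq

end Topology

namespace AlgebraicGeometry

lemma Scheme.Hom.exists_comp_eq_of_isIso_appTop {X Y S : Scheme} (f : X ⟶ Y) [IsIso f.appTop]
    [IsAffine S] (s : X ⟶ S) : ∃ t : Y ⟶ S, f ≫ t = s := by
  refine ⟨Y.toSpecΓ ≫ Spec.map (s.appTop ≫ inv f.appTop) ≫ S.isoSpec.inv, ?_⟩
  rw [Scheme.toSpecΓ_naturality_assoc, ← Spec.map_comp_assoc, Category.assoc, IsIso.inv_hom_id,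
    Category.comp_id, ← Scheme.toSpecΓ_naturality_assoc, ← Scheme.isoSpec_hom, Iso.hom_inv_id,
    Category.comp_id]

lemma LocallyOfFiniteType.of_isIso_appTop {X Y S : Scheme} (f : X ⟶ Y) [IsIso f.appTop]
    [IsAffine S] (s : X ⟶ S) [LocallyOfFiniteType s] : LocallyOfFiniteType f := by
  obtain ⟨t, rfl⟩ := f.exists_comp_eq_of_isIso_appTop s
  exact locallyOfFiniteType_of_comp f t

lemma Scheme.Hom.apply_eq_apply_of_forall_isClosed {X Y Z : Scheme} [JacobsonSpace X]
    (f : X ⟶ Y) [LocallyOfFiniteType f] (g : X ⟶ Z)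
    (h : ∀ x x' : X, IsClosed ({x} : Set X) → IsClosed ({x'} : Set X) →
      f.base x = f.base x' → g.base x = g.base x')
    (η η' : X) (hη : f.base η = f.base η') : g.base η = g.base η' := by
  have : JacobsonSpace ↥(pullback f f) := LocallyOfFiniteType.jacobsonSpace (pullback.fst f f)
  have hcomp : g.base ∘ (pullback.fst f f).base = g.base ∘ (pullback.snd f f).base :=
    eq_of_eqOn_closedPoints (by fun_prop) (by fun_prop) fun w hw =>
      h _ _ ((pullback.fst f f).closePoints_subset_preimage_closedPoints hw)
        ((pullback.snd f f).closePoints_subset_preimage_closedPoints hw)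
        (by simp only [← Scheme.Hom.comp_apply, pullback.condition])
  obtain ⟨w, rfl, rfl⟩ := Scheme.Pullback.exists_preimage_pullback η η' hη
  exact congr_fun hcomp w

end AlgebraicGeometry

theorem rigidity_constant_on_scheme_point_fibers_general
    (X Y Z : Scheme)
    (sX : X ⟶ Spec (CommRingCat.of ℂ))
    [LocallyOfFiniteType sX]
    (f : X ⟶ Y) (g : X ⟶ Z)
    (h2 : IsIso f.c)
    (h3 : ∀ x x' : X, IsClosed ({x} : Set X) → IsClosed ({x'} : Set X) →
      f.base x = f.base x' → g.base x = g.base x') :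
    ∀ η η' : X, f.base η = f.base η' → g.base η = g.base η' := by
  have : IsIso f.appTop := inferInstanceAs (IsIso (f.c.app _))
  have : LocallyOfFiniteType f := .of_isIso_appTop f sX
  have : JacobsonSpace X := LocallyOfFiniteType.jacobsonSpace sX
  exact f.apply_eq_apply_of_forall_isClosed g h3

/-- Claim 1 in the proof of the rigidity lemma: under the hypotheses of
the non-proper rigidity lemma, `g` is constant on the set-theoretic fibers of `f`,
i.e. if two (not necessarily closed) scheme points `η, η'` of `X` satisfy
`f(η) = f(η')`, then `g(η) = g(η')`. -/
theorem rigidity_constant_on_scheme_point_fibers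
    (X Y Z : Scheme)
    (sX : X ⟶ Spec (CommRingCat.of ℂ))
    (sY : Y ⟶ Spec (CommRingCat.of ℂ))
    (sZ : Z ⟶ Spec (CommRingCat.of ℂ))
    [IsIntegral X] [IsIntegral Y] [IsIntegral Z]
    [IsSeparated sX] [IsSeparated sY] [IsSeparated sZ]
    [LocallyOfFiniteType sX] [LocallyOfFiniteType sY] [LocallyOfFiniteType sZ]
    [QuasiCompact sX] [QuasiCompact sY] [QuasiCompact sZ]
    (f : X ⟶ Y) (g : X ⟶ Z)
    (h1 : Topology.IsQuotientMap f.base)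
    (h2 : IsIso f.c)
    (h3 : ∀ x x' : X, IsClosed ({x} : Set X) → IsClosed ({x'} : Set X) →
      f.base x = f.base x' → g.base x = g.base x') :
    ∀ η η' : X, f.base η = f.base η' → g.base η = g.base η' :=
  rigidity_constant_on_scheme_point_fibers_general X Y Z sX f g h2 h3
end

section
/- Let X, Y, Z be locally ringed spaces, let f : X → Y be a morphism of locally ringed spaces whose underlying continuous map is surjective and whose structure map f^♯ : 𝒪_Y → f_*𝒪_X is an isomorphism of sheaves, let g : X → Z be a morphism of locally ringed spaces, and let h : |Y| → |Z| be a continuous map such that the underlying continuous map of g equals h composed with the underlying continuous map of f. Then there exists a morphism of locally ringed spaces h̃ : Y → Z whose underlying continuous map is h and which satisfies g = h̃ ∘ f. -/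
/-!
Since `f^♯ : 𝒪_Y ⟶ f_* 𝒪_X` is invertible, the structure map of `h̃` is forced:
`𝒪_Z ⟶ g_* 𝒪_X = h_* f_* 𝒪_X ≅ h_* 𝒪_Y`, the last arrow being `h_*` of `(f^♯)⁻¹`.
Locality of its stalk maps comes from surjectivity of `f`: at `y = f x` the stalk map of
`g` at `x` factors through that of `h̃` at `y`, and the first factor of a local
composite is local.
-/

open AlgebraicGeometry CategoryTheory

universe w v u

namespace AlgebraicGeometry.PresheafedSpace

variable {C : Type u} [Category.{v} C] {X Y Z : PresheafedSpace.{_, _, w} C}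

noncomputable def factorThrough (f : X ⟶ Y) [IsIso f.c] (g : X ⟶ Z) (h : (Y : TopCat) ⟶ Z)
    (fac : f.base ≫ h = g.base) : Y ⟶ Z where
  base := h
  c := g.c ≫ eqToHom (by rw [← fac]; rfl) ≫ inv ((TopCat.Presheaf.pushforward C h).map f.c)

lemma comp_factorThrough (f : X ⟶ Y) [IsIso f.c] (g : X ⟶ Z) (h : (Y : TopCat) ⟶ Z)
    (fac : f.base ≫ h = g.base) : f ≫ factorThrough f g h fac = g := by
  refine PresheafedSpace.ext _ _ fac ?_
  change ((factorThrough f g h fac).c ≫ (TopCat.Presheaf.pushforward C h).map f.c) ≫ _ = _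
  simp only [factorThrough, Category.assoc, IsIso.inv_hom_id, Category.comp_id]
  ext U
  erw [NatTrans.comp_app, NatTrans.comp_app, eqToHom_app, Functor.whiskerRight_app, eqToHom_app,
    eqToHom_map, Category.assoc, eqToHom_trans, eqToHom_refl, Category.comp_id]

lemma isLocalHom_stalkMap_of_comp {X Y Z : PresheafedSpace.{_, _, w} CommRingCat.{w}}
    (f : X ⟶ Y) (φ : Y ⟶ Z) (x : X) (hloc : IsLocalHom ((f ≫ φ).stalkMap x).hom) :
    IsLocalHom (φ.stalkMap (f.base x)).hom := by
  erw [stalkMap.comp] at hloc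
  exact @isLocalHom_of_comp _ _ _ _ _ _ _ (f.stalkMap x).hom hloc

end AlgebraicGeometry.PresheafedSpace

/-- The sheaf-theoretic part of the rigidity lemma: let `X, Y, Z` be locally ringed
spaces, `f : X ⟶ Y` a morphism whose underlying map is surjective and whose structure
map `f^♯ : 𝒪_Y ⟶ f_* 𝒪_X` is an isomorphism, `g : X ⟶ Z` a morphism, and
`h : |Y| → |Z|` a continuous map with `g = h ∘ f` on underlying spaces. Then `h`
upgrades to a morphism of locally ringed spaces `h̃ : Y ⟶ Z` with `g = h̃ ∘ f`. -/
theorem rigidity_locally_ringed_space_factorization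
    (X Y Z : LocallyRingedSpace)
    (f : X ⟶ Y) (g : X ⟶ Z)
    (hsurj : Function.Surjective f.base)
    (hiso : IsIso f.c)
    (h : Y → Z) (hcont : Continuous h)
    (hcomp : ⇑g.base = h ∘ ⇑f.base) :
    ∃ ht : Y ⟶ Z, ⇑ht.base = h ∧ g = f ≫ ht := by
  let hb : Y.toTopCat ⟶ Z.toTopCat := TopCat.ofHom ⟨h, hcont⟩
  have hbase : f.base ≫ hb = g.base := by
    ext x
    exact (congrFun hcomp x).symm
  let φ := PresheafedSpace.factorThrough f.toHom g.toHom hb hbase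
  have hfac : f.toHom ≫ φ = g.toHom := PresheafedSpace.comp_factorThrough _ _ _ _
  refine ⟨⟨φ, fun y => ?_⟩, rfl,
    LocallyRingedSpace.Hom.ext' hfac.symm⟩
  obtain ⟨x, rfl⟩ := hsurj y
  refine PresheafedSpace.isLocalHom_stalkMap_of_comp f.toHom _ x ?_
  rw [hfac]
  exact g.prop x
end

section
/- Let e and d be natural numbers, set n = e + d, and let M be an e × n integer matrix such that the last d columns of M are zero and the e × e matrix formed by the first e columns of M has nonzero determinant. Then there exists an e × e integer matrix L whose determinant is a unit in ℤ (i.e. det L = ±1) such that every entry of the product L·M is nonnegative. -/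
/-!
Row-reduce the first column by the Euclidean algorithm, so that the matrix becomes
`[[a, x], [0, B]]` with `a * det B ≠ 0`. By induction some unimodular `L` makes `L * B`
nonnegative; as `L * B` is nonsingular, each of its columns has a positive entry, so adding a
large multiple of the sum of its rows to `±(a, x)` makes the first row nonnegative too. The
columns beyond the first `e` vanish and stay zero.
-/

open Matrix

section Clearing

variable {R : Type*} [EuclideanDomain R] {n m : Type*} [Fintype n] [DecidableEq n]

theorem exists_isUnit_det_mul_apply_eq_zero_of_ne {i j : n} (hij : i ≠ j) (c : m)
    (A : Matrix n m R) :
    ∃ U : Matrix n n R, IsUnit U.det ∧ (U * A) j c = 0 ∧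
      ∀ k, k ≠ i → k ≠ j → (U * A) k = A k := by
  suffices ∀ a, ∀ A : Matrix n m R, A j c = a → ∃ U : Matrix n n R, IsUnit U.det ∧
      (U * A) j c = 0 ∧ ∀ k, k ≠ i → k ≠ j → (U * A) k = A k from this _ A rfl
  intro a
  induction a using (EuclideanDomain.r_wellFounded (R := R)).induction with
  | h a ih =>
  rintro A rfl
  by_cases hzero : A j c = 0
  · exact ⟨1, by simp, by simpa using hzero, fun k _ _ => by simp⟩
  -- Euclid's step: reduce row `i` modulo row `j`, then swap the two rows.
  set T := transvection i j (-(A i c / A j c))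
  set P := (Equiv.swap i j).permMatrix R
  have hPT : P * (T * A) = (T * A).submatrix (Equiv.swap i j) id :=
    PEquiv.toMatrix_toPEquiv_mul _ _
  have hlt : EuclideanDomain.r ((P * (T * A)) j c) (A j c) := by
    rw [hPT, submatrix_apply, Equiv.swap_apply_right, transvection_mul_apply_same]
    convert EuclideanDomain.mod_lt (A i c) hzero using 1
    rw [EuclideanDomain.mod_eq_sub_mul_div, id]
    ring
  obtain ⟨U, hU, hUj, hUk⟩ := ih _ hlt (P * (T * A)) rfl
  refine ⟨U * P * T, ?_, ?_, fun k hki hkj => ?_⟩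
  · simp only [det_mul, P, det_permutation, T, det_transvection_of_ne i j hij, mul_one]
    exact hU.mul ((Equiv.Perm.sign _).isUnit.map (Int.castRingHom R))
  · rwa [Matrix.mul_assoc, Matrix.mul_assoc]
  · rw [Matrix.mul_assoc, Matrix.mul_assoc, hUk k hki hkj, hPT]
    ext b
    simp [Equiv.swap_apply_of_ne_of_ne hki hkj, T, transvection_mul_apply_of_ne _ _ _ b hki]

theorem exists_isUnit_det_mul_apply_eq_zero (i₀ : n) (c : m) (A : Matrix n m R) :
    ∃ U : Matrix n n R, IsUnit U.det ∧ ∀ i, i ≠ i₀ → (U * A) i c = 0 := by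
  suffices ∀ s : Finset n, ∃ U : Matrix n n R, IsUnit U.det ∧
      ∀ i ∈ s, i ≠ i₀ → (U * A) i c = 0 by
    simpa using this Finset.univ
  intro s
  induction s using Finset.induction_on with
  | empty => exact ⟨1, by simp, by simp⟩
  | insert j s _ ih =>
    obtain ⟨U, hU, hUs⟩ := ih
    by_cases hj : j = i₀
    · refine ⟨U, hU, fun i hi hi₀ => hUs i ?_ hi₀⟩
      exact (Finset.mem_insert.mp hi).resolve_left (hj ▸ hi₀)
    obtain ⟨V, hV, hVj, hVk⟩ := exists_isUnit_det_mul_apply_eq_zero_of_ne (Ne.symm hj) c (U * A)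
    refine ⟨V * U, by simpa only [det_mul] using hV.mul hU, fun i hi hi₀ => ?_⟩
    rw [Matrix.mul_assoc]
    rcases eq_or_ne i j with rfl | hij
    · exact hVj
    · rw [hVk i hi₀ hij]
      exact hUs i ((Finset.mem_insert.mp hi).resolve_left hij) hi₀

end Clearing

theorem Matrix.det_eq_mul_det_submatrix_succ {R : Type*} [CommRing R] {m : ℕ}
    (A : Matrix (Fin (m + 1)) (Fin (m + 1)) R) (h : ∀ i : Fin m, A i.succ 0 = 0) :
    A.det = A 0 0 * (A.submatrix Fin.succ Fin.succ).det := by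
  simp [det_succ_column_zero A, Fin.sum_univ_succ, h]

theorem one_le_sum_apply_of_nonneg_of_det_ne_zero {n : Type*} [Fintype n] [DecidableEq n]
    {B : Matrix n n ℤ} (hB : ∀ i j, 0 ≤ B i j) (hdet : B.det ≠ 0) (j : n) :
    1 ≤ ∑ i, B i j := by
  by_contra! hsum
  have hcol : ∀ i, B i j = 0 := fun i =>
    (Finset.sum_eq_zero_iff_of_nonneg fun i _ => hB i j).mp
      (le_antisymm (Int.lt_add_one_iff.mp hsum) (Finset.sum_nonneg fun i _ => hB i j)) i
      (Finset.mem_univ i)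
  exact hdet (det_eq_zero_of_column_eq_zero j hcol)

theorem exists_isUnit_det_mul_nonneg_of_submatrix_succ {m : ℕ}
    (C : Matrix (Fin (m + 1)) (Fin (m + 1)) ℤ) (hC : ∀ i : Fin m, C i.succ 0 = 0)
    (hdet : (C.submatrix Fin.succ Fin.succ).det ≠ 0) {L : Matrix (Fin m) (Fin m) ℤ}
    (hL : IsUnit L.det) (hLC : ∀ i j, 0 ≤ (L * C.submatrix Fin.succ Fin.succ) i j) :
    ∃ K : Matrix (Fin (m + 1)) (Fin (m + 1)) ℤ, IsUnit K.det ∧ ∀ i j, 0 ≤ (K * C) i j := by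
  set s : ℤ := if 0 ≤ C 0 0 then 1 else -1
  set N : ℤ := ∑ j, |C 0 j|
  set K : Matrix (Fin (m + 1)) (Fin (m + 1)) ℤ :=
    of (Fin.cons (Fin.cons s fun k => N * ∑ i, L i k) fun i => Fin.cons 0 (L i))
  have hK0 : ∀ j, (K * C) 0 j = s * C 0 j + N * ∑ i, (L * C.submatrix Fin.succ id) i j := by
    intro j
    simp only [mul_apply, Fin.sum_univ_succ (n := m), K, of_apply, Fin.cons_zero,
      Fin.cons_succ, Finset.mul_sum, Finset.sum_mul, submatrix_apply, id, mul_assoc]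
    rw [Finset.sum_comm]
  have hKsucc : ∀ i j, (K * C) i.succ j = (L * C.submatrix Fin.succ id) i j := by
    intro i j
    simp [mul_apply, Fin.sum_univ_succ (n := m), K]
  have hLC0 : ∀ i, (L * C.submatrix Fin.succ id) i 0 = 0 := fun i => by simp [mul_apply, hC]
  have hs : 0 ≤ s * C 0 0 := by unfold s; split_ifs <;> linarith
  refine ⟨K, ?_, fun i j => ?_⟩
  · rw [det_eq_mul_det_submatrix_succ K fun i => rfl]
    exact (show IsUnit s by unfold s; split_ifs <;> simp).mul hL
  induction i using Fin.cases with
  | zero =>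
    induction j using Fin.cases with
    | zero => simpa [hK0, hLC0] using hs
    | succ j =>
      have hsum : 1 ≤ ∑ i, (L * C.submatrix Fin.succ id) i j.succ :=
        one_le_sum_apply_of_nonneg_of_det_ne_zero hLC (by simpa using ⟨hL.ne_zero, hdet⟩) j
      have hN : |C 0 j.succ| ≤ N :=
        Finset.single_le_sum (f := fun j => |C 0 j|) (fun _ _ => abs_nonneg _) (Finset.mem_univ _)
      have : -|C 0 j.succ| ≤ s * C 0 j.succ := by
        unfold s; split_ifs <;> simp [neg_abs_le, le_abs_self]
      rw [hK0]
      nlinarith [abs_nonneg (C 0 j.succ)]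
  | succ i =>
    induction j using Fin.cases with
    | zero => simp [hKsucc, hLC0]
    | succ j => exact hKsucc i j.succ ▸ hLC i j

theorem exists_isUnit_det_mul_nonneg {n : ℕ} (A : Matrix (Fin n) (Fin n) ℤ) (hA : A.det ≠ 0) :
    ∃ L : Matrix (Fin n) (Fin n) ℤ, IsUnit L.det ∧ ∀ i j, 0 ≤ (L * A) i j := by
  induction n with
  | zero => exact ⟨1, by simp, fun i => i.elim0⟩
  | succ m ih =>
    obtain ⟨U, hU, hUA⟩ := exists_isUnit_det_mul_apply_eq_zero 0 0 A
    have hC : ∀ i : Fin m, (U * A) i.succ 0 = 0 := fun i => hUA _ i.succ_ne_zero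
    have hdet : (U * A) 0 0 * ((U * A).submatrix Fin.succ Fin.succ).det ≠ 0 := by
      rw [← det_eq_mul_det_submatrix_succ _ hC, det_mul]
      exact mul_ne_zero hU.ne_zero hA
    obtain ⟨L, hL, hLC⟩ := ih _ (right_ne_zero_of_mul hdet)
    obtain ⟨K, hK, hKC⟩ :=
      exists_isUnit_det_mul_nonneg_of_submatrix_succ _ hC (right_ne_zero_of_mul hdet) hL hLC
    refine ⟨K * U, by simpa only [det_mul] using hK.mul hU, ?_⟩
    rwa [Matrix.mul_assoc]

/-- Matrix form of extending a linear torus action: if the last `d` columns of an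
`e × (e + d)` integer matrix `M` vanish and the square matrix formed by the first `e`
columns has nonzero determinant, then there is a matrix `L`, invertible over `ℤ`, such
that `L * M` has only nonnegative entries. -/
theorem exists_unimodular_mul_nonneg
    (e d : ℕ) (M : Matrix (Fin e) (Fin (e + d)) ℤ)
    (hzero : ∀ (i : Fin e) (j : Fin (e + d)), e ≤ (j : ℕ) → M i j = 0)
    (hdet : (M.submatrix id (Fin.castAdd d)).det ≠ 0) :
    ∃ L : Matrix (Fin e) (Fin e) ℤ, IsUnit L.det ∧
      ∀ (i : Fin e) (j : Fin (e + d)), 0 ≤ (L * M) i j := by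
  obtain ⟨L, hL, hLM⟩ := exists_isUnit_det_mul_nonneg _ hdet
  refine ⟨L, hL, fun i j => ?_⟩
  induction j using Fin.addCases with
  | left j => exact hLM i j
  | right k =>
    have hcol : ∀ x, M x (Fin.natAdd e k) = 0 := fun x => hzero x _ (by simp)
    simp [mul_apply, hcol]
end
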